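/- The one-dimensional representation of T_n given by sgn on permutations and 0 on non-bijective maps is a well-defined monoid homomorphism from T_n to (ℂ, ·), and the corresponding ℂ[T_n]-module is isomorphic to Λ^n(ℂ^n) with the natural action; in particular it is a projective simple ℂ[T_n]-module. -/

import Mathlib

open Finset in
/-- The natural representation of the full transformation monoid `Function.End (Fin n)`
on `ℂ^n`, determined by `f · v_i = v_{f i}` on the standard basis. -/
noncomputable def natRep (n : ℕ) :
    Representation ℂ (Function.End (Fin n)) (Fin n → ℂ) where
  toFun f :=
    { toFun := fun x j => ∑ i, if f i = j then x i else 0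
      map_add' := by
        intro x y
        funext j
        simp only [Pi.add_apply]
        rw [← Finset.sum_add_distrib]
        congr 1; funext i; split <;> simp
      map_smul' := by
        intro c x
        funext j
        simp [Finset.mul_sum, apply_ite (fun t => c * t)] }
  map_one' := by
    refine LinearMap.ext fun x => funext fun j => ?_
    show (∑ i, if (1 : Function.End (Fin n)) i = j then x i else 0) = x j
    have h : ∀ i : Fin n, (1 : Function.End (Fin n)) i = i := fun _ => rfl
    simp only [h]
    rw [Finset.sum_ite_eq' Finset.univ j x]
    simp
  map_mul' := by
    intro f g
    refine LinearMap.ext fun x => funext fun j => ?_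
    show (∑ i, if f (g i) = j then x i else 0)
        = ∑ k, if f k = j then ∑ i, if g i = k then x i else 0 else 0
    have key : ∀ k, (if f k = j then ∑ i, if g i = k then x i else 0 else 0)
        = ∑ i, if g i = k then (if f k = j then x i else 0) else 0 := by
      intro k; split
      · rfl
      · simp
    rw [Finset.sum_congr rfl (fun k _ => key k), Finset.sum_comm]
    refine Finset.sum_congr rfl fun i _ => ?_
    rw [Finset.sum_ite_eq Finset.univ (g i) (fun k => if f k = j then x i else 0)]
    simp

lemma sum_natRep (n : ℕ) (f : Function.End (Fin n)) (x : Fin n → ℂ) :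
    ∑ j, natRep n f x j = ∑ i, x i := by
  show ∑ j, ∑ i, (if f i = j then x i else 0) = _
  rw [Finset.sum_comm]
  simp [Finset.sum_ite_eq' Finset.univ]

/-- The augmentation submodule `Aug(ℂ^n)` of the natural module: vectors whose
coordinates sum to zero. -/
noncomputable def Aug (n : ℕ) : Submodule ℂ (Fin n → ℂ) where
  carrier := {x | ∑ i, x i = 0}
  add_mem' := by intro a b ha hb; simp_all [Finset.sum_add_distrib]
  zero_mem' := by simp
  smul_mem' := by intro c a ha; simp_all [← Finset.mul_sum]

lemma natRep_mem_aug (n : ℕ) (f : Function.End (Fin n)) {x : Fin n → ℂ}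
    (hx : x ∈ Aug n) : natRep n f x ∈ Aug n := by
  have : ∑ j, natRep n f x j = 0 := by rw [sum_natRep]; exact hx
  exact this

/-- The representation of the full transformation monoid on the augmentation submodule. -/
noncomputable def augRep (n : ℕ) : Representation ℂ (Function.End (Fin n)) (Aug n) where
  toFun f := (natRep n f).restrict (p := Aug n) (q := Aug n) (fun _ hx => natRep_mem_aug n f hx)
  map_one' := by
    refine LinearMap.ext fun x => Subtype.ext ?_
    simp [LinearMap.restrict_apply]
  map_mul' := by
    intro f g
    refine LinearMap.ext fun x => Subtype.ext ?_
    simp [LinearMap.restrict_apply]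

lemma extAlg_map_mem {R M N : Type} [CommRing R] [AddCommGroup M] [Module R M]
    [AddCommGroup N] [Module R N] (r : ℕ) (f : M →ₗ[R] N) {x : ExteriorAlgebra R M}
    (hx : x ∈ ⋀[R]^r M) : ExteriorAlgebra.map f x ∈ ⋀[R]^r N := by
  rw [← ExteriorAlgebra.ιMulti_span_fixedDegree] at hx ⊢
  induction hx using Submodule.span_induction with
  | mem y hy =>
      obtain ⟨v, rfl⟩ := hy
      rw [ExteriorAlgebra.map_apply_ιMulti]
      exact Submodule.subset_span ⟨f ∘ v, rfl⟩
  | zero => simp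
  | add y z _ _ hy hz => rw [map_add]; exact Submodule.add_mem _ hy hz
  | smul c y _ hy => rw [map_smul]; exact Submodule.smul_mem _ c hy

/-- The linear map between `r`-th exterior powers induced by a linear map. -/
noncomputable def extMap {R M N : Type} [CommRing R] [AddCommGroup M] [Module R M]
    [AddCommGroup N] [Module R N] (r : ℕ) (f : M →ₗ[R] N) :
    ⋀[R]^r M →ₗ[R] ⋀[R]^r N :=
  (ExteriorAlgebra.map f).toLinearMap.restrict (p := ⋀[R]^r M) (q := ⋀[R]^r N)
    (fun _ hx => extAlg_map_mem r f hx)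

/-- The representation of the full transformation monoid on the `r`-th exterior power
of the natural module, by the diagonal action on wedge products. -/
noncomputable def extRep (n r : ℕ) :
    Representation ℂ (Function.End (Fin n)) (⋀[ℂ]^r (Fin n → ℂ)) where
  toFun f := extMap r (natRep n f)
  map_one' := by
    refine LinearMap.ext fun x => Subtype.ext ?_
    simp [extMap, LinearMap.restrict_apply, map_one, Module.End.one_eq_id,
      ExteriorAlgebra.map_id]
  map_mul' := by
    intro f g
    refine LinearMap.ext fun x => Subtype.ext ?_
    simp only [extMap, LinearMap.restrict_apply, map_mul, Module.End.mul_eq_comp,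
      ← ExteriorAlgebra.map_comp_map]
    rfl

set_option synthInstance.maxHeartbeats 1000000 in
/-- The representation of the full transformation monoid on the `r`-th exterior power
of the augmentation submodule. -/
noncomputable def extAugRep (n r : ℕ) :
    Representation ℂ (Function.End (Fin n)) (⋀[ℂ]^r ↥(Aug n)) where
  toFun f := extMap r (augRep n f)
  map_one' := by
    refine LinearMap.ext fun x => Subtype.ext ?_
    simp [extMap, LinearMap.restrict_apply, map_one, Module.End.one_eq_id,
      ExteriorAlgebra.map_id]
  map_mul' := by
    intro f g
    refine LinearMap.ext fun x => Subtype.ext ?_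
    simp only [extMap, LinearMap.restrict_apply, map_mul, Module.End.mul_eq_comp,
      ← ExteriorAlgebra.map_comp_map]
    rfl

/-- The idempotent `e_m ∈ T_n` fixing the first `m` points and sending all other
points to the first point. -/
def eIdem (n m : ℕ) : Function.End (Fin n) :=
  fun i => if h : (i : ℕ) < m then i else ⟨0, i.pos⟩

/-- The embedding of the symmetric group `S_r` into `T_n` as the maximal subgroup
at the idempotent `eIdem n r` (elements `g` with `e g e = g` invertible in `e T_n e`). -/
def permEmbed (n r : ℕ) (hr : 1 ≤ r) (hrn : r ≤ n) (σ : Equiv.Perm (Fin r)) :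
    Function.End (Fin n) :=
  fun i => Fin.castLE hrn (σ (if hi : (i : ℕ) < r then ⟨i, hi⟩ else ⟨0, hr⟩))

/-- The idempotent `η = (1/r!) ∑_{g ∈ G} sgn(g|_{[r]}) g` of the monoid algebra,
where `G ≅ S_r` is the maximal subgroup at `eIdem n r`. -/
noncomputable def eta (n r : ℕ) (hr : 1 ≤ r) (hrn : r ≤ n) :
    MonoidAlgebra ℂ (Function.End (Fin n)) :=
  (r.factorial : ℂ)⁻¹ • ∑ σ : Equiv.Perm (Fin r),
    MonoidAlgebra.single (permEmbed n r hr hrn σ) ((Equiv.Perm.sign σ : ℤ) : ℂ)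

/-- A permutation of `Fin m`, viewed as an element of the transformation monoid. -/
def permToEnd (m : ℕ) : Equiv.Perm (Fin m) →* Function.End (Fin m) where
  toFun σ := ⇑σ
  map_one' := rfl
  map_mul' := fun _ _ => rfl

/-- The wedge product of a family of `r` vectors, as an element of the `r`-th
exterior power. -/
noncomputable def wedge {M : Type} [AddCommGroup M] [Module ℂ M] (r : ℕ) (v : Fin r → M) :
    ⋀[ℂ]^r M :=
  ⟨ExteriorAlgebra.ιMulti ℂ r v, ExteriorAlgebra.ιMulti_range ℂ r ⟨v, rfl⟩⟩

/-- The basis `w_1, …, w_n` of `ℂ^n`: `w_i = v_i - v_n` for `i < n` and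
`w_n = v_1 + ⋯ + v_n`. -/
noncomputable def wBasis (n : ℕ) : Fin n → (Fin n → ℂ) :=
  fun i => if h : (i : ℕ) < n - 1
    then Pi.single i 1 - Pi.single (⟨n - 1, by omega⟩ : Fin n) 1
    else ∑ j, Pi.single j 1

lemma wBasis_mem_aug (n : ℕ) (i : Fin n) (h : (i : ℕ) < n - 1) : wBasis n i ∈ Aug n := by
  show ∑ j, wBasis n i j = 0
  simp [wBasis, h, Finset.sum_sub_distrib, Finset.sum_pi_single]

/-- The vectors `w_i = v_i - v_n` (for `i < n`) as elements of the augmentation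
submodule; junk value `0` otherwise. -/
noncomputable def wAug (n : ℕ) : Fin n → ↥(Aug n) :=
  fun i => if h : (i : ℕ) < n - 1 then ⟨wBasis n i, wBasis_mem_aug n i h⟩ else 0

/-- The trivial representation of the full transformation monoid on `ℂ`. -/
noncomputable def trivRep (n : ℕ) : Representation ℂ (Function.End (Fin n)) ℂ := 1

/-- `projDimLE R M k` : the `R`-module `M` admits a projective resolution of length
at most `k`, i.e. has projective dimension at most `k`. -/
def projDimLE (R : Type) [Ring R] (M : Type) [AddCommMonoid M] [Module R M] (k : ℕ) : Prop :=
  ∃ (P : ℕ → ModuleCat.{0} R) (d : (i : ℕ) → (P (i + 1) →ₗ[R] P i)) (π : P 0 →ₗ[R] M),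
    (∀ i, Module.Projective R (P i)) ∧
    Function.Surjective π ∧
    LinearMap.ker π = LinearMap.range (d 0) ∧
    (∀ i, LinearMap.ker (d i) = LinearMap.range (d (i + 1))) ∧
    (∀ i, k < i → Subsingleton (P i))

/-- The sign character of `S_n`, extended by zero to all of `T_n`. -/
noncomputable def sgnExt (n : ℕ) (f : Function.End (Fin n)) : ℂ :=
  haveI : Decidable (Function.Bijective f) := Fintype.decidableBijectiveFintype f
  if h : Function.Bijective f then ((Equiv.Perm.sign (Equiv.ofBijective f h) : ℤ) : ℂ) else 0

/-! The top exterior power `Λ^n(ℂ^n)` is a line spanned by `ω = e₁ ∧ ⋯ ∧ eₙ`, and `f ∈ T_n` sends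
`ω` to `e_{f 1} ∧ ⋯ ∧ e_{f n}`, which is `sgn f • ω` if `f` is a permutation and `0` otherwise
(a factor repeats). So `T_n` acts on the line through the scalar `sgnExt n f`, which is therefore
multiplicative. Being a line, the module is simple. It is projective because the antisymmetrizer
`η = (1/n!) ∑ sgn σ • σ` satisfies `f η = sgnExt n f • η` and acts as the identity, so `v ↦ η ⊗ v`
splits the action map `ℂ[T_n] ⊗ Λ^n(ℂ^n) → Λ^n(ℂ^n)`. -/

namespace Representation

variable {k G V : Type*} [CommRing k] [Monoid G] [AddCommGroup V] [Module k V]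
  {ρ : Representation k G V} {χ : G → k}

theorem map_one_of_eq_smul_one [IsDomain k] [Module.IsTorsionFree k V] [Nontrivial V]
    (hρ : ∀ g, ρ g = χ g • 1) : χ 1 = 1 := by
  obtain ⟨v, hv⟩ := exists_ne (0 : V)
  refine smul_left_injective k hv ?_
  simpa using (LinearMap.congr_fun (hρ 1) v).symm

theorem map_mul_of_eq_smul_one [IsDomain k] [Module.IsTorsionFree k V] [Nontrivial V]
    (hρ : ∀ g, ρ g = χ g • 1) (g h : G) : χ (g * h) = χ g * χ h := by
  obtain ⟨v, hv⟩ := exists_ne (0 : V)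
  refine smul_left_injective k hv ?_
  have hgh := LinearMap.congr_fun (ρ.map_mul g h) v
  simp only [hρ, LinearMap.smul_apply, Module.End.mul_apply, Module.End.one_apply,
    map_smul] at hgh
  show χ (g * h) • v = (χ g * χ h) • v
  rw [hgh, smul_smul, mul_comm]

open _root_.TensorProduct in
theorem projective_asModule_of_eq_smul_one [Module.Projective k V] (hρ : ∀ g, ρ g = χ g • 1)
    {η : MonoidAlgebra k G} (hη : ∀ g, MonoidAlgebra.of k G g * η = χ g • η)
    (hρη : ρ.asAlgebraHom η = 1) : Module.Projective (MonoidAlgebra k G) ρ.asModule := by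
  have hsmul : ∀ (r : MonoidAlgebra k G) (v : V),
      η ⊗ₜ[k] ρ.asAlgebraHom r v = (r * η) ⊗ₜ v := by
    intro r v
    induction r using MonoidAlgebra.induction_on with
    | of g => rw [asAlgebraHom_of, hρ, hη, LinearMap.smul_apply, smul_tmul]; rfl
    | add r s hr hs => rw [map_add, LinearMap.add_apply, tmul_add, hr, hs, add_mul, add_tmul]
    | smul c r hr =>
      rw [map_smul, LinearMap.smul_apply, tmul_smul, hr, smul_mul_assoc, smul_tmul']
  let i : ρ.asModule →ₗ[MonoidAlgebra k G] MonoidAlgebra k G ⊗[k] V :=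
    { toFun := fun v => η ⊗ₜ[k] ρ.asModuleEquiv v
      map_add' := fun v w => by rw [map_add, tmul_add]
      map_smul' := fun r v => by rw [asModuleEquiv_map_smul, hsmul]; rfl }
  let s : MonoidAlgebra k G ⊗[k] V →ₗ[MonoidAlgebra k G] ρ.asModule :=
    AlgebraTensorModule.lift
      (LinearMap.toSpanSingleton _ _ ρ.asModuleEquiv.symm.toLinearMap)
  refine Module.Projective.of_split i s (LinearMap.ext fun v => ?_)
  apply ρ.asModuleEquiv.injective
  simp [i, s, asModuleEquiv_map_smul, hρη]

end Representation

theorem exteriorPower.finrank_eq_one_of_finrank_eq {R M : Type*} [CommRing R] [Nontrivial R]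
    [AddCommGroup M] [Module R M] [Module.Free R M] [Module.Finite R M] {n : ℕ}
    (h : Module.finrank R M = n) : Module.finrank R (⋀[R]^n M) = 1 := by
  rw [exteriorPower.finrank_eq, h, Nat.choose_self]

theorem exteriorPower.ιMulti_piSingle_ne_zero (R : Type*) [CommRing R] [Nontrivial R] (n : ℕ) :
    exteriorPower.ιMulti R n (fun i : Fin n => (Pi.single i 1 : Fin n → R)) ≠ 0 := by
  intro h
  have hdet := congrArg (exteriorPower.alternatingMapLinearEquiv Matrix.detRowAlternating) h
  rw [exteriorPower.alternatingMapLinearEquiv_apply_ιMulti, map_zero] at hdet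
  have hone :
      (fun i : Fin n => (Pi.single i 1 : Fin n → R)) = (1 : Matrix (Fin n) (Fin n) R) := by
    ext i j
    simp [Matrix.one_apply, Pi.single_apply, eq_comm]
  rw [hone] at hdet
  exact one_ne_zero ((Matrix.det_one (n := Fin n) (R := R)).symm.trans hdet)

theorem AlternatingMap.map_comp_eq_sgnExt_smul {M N : Type*} [AddCommGroup M] [Module ℂ M]
    [AddCommGroup N] [Module ℂ N] {n : ℕ} (g : M [⋀^Fin n]→ₗ[ℂ] N) (v : Fin n → M)
    (f : Function.End (Fin n)) : g (fun i => v (f i)) = sgnExt n f • g v := by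
  by_cases hf : Function.Bijective f
  · rw [sgnExt, dif_pos hf, Int.cast_smul_eq_zsmul, ← Units.smul_def, ← g.map_perm]
    rfl
  · have hvf : ¬ Function.Injective (fun i => v (f i)) := fun h =>
      hf (Finite.injective_iff_bijective.1 (Function.Injective.of_comp (f := v) h))
    rw [sgnExt, dif_neg hf, zero_smul, g.map_eq_zero_of_not_injective _ hvf]

theorem natRep_single (n : ℕ) (f : Function.End (Fin n)) (i : Fin n) (c : ℂ) :
    natRep n f (Pi.single i c) = Pi.single (f i) c := by
  funext j
  show ∑ k, (if f k = j then Pi.single i c k else 0) = _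
  rw [Finset.sum_eq_single i (fun k _ hk => by simp [hk]) (by simp)]
  simp [Pi.single_apply, eq_comm]

theorem extRep_ιMulti (n r : ℕ) (f : Function.End (Fin n)) (v : Fin r → Fin n → ℂ) :
    extRep n r f (exteriorPower.ιMulti ℂ r v) = exteriorPower.ιMulti ℂ r (natRep n f ∘ v) :=
  Subtype.ext (ExteriorAlgebra.map_apply_ιMulti _ _)

theorem extRep_top_eq_smul_one (n : ℕ) (f : Function.End (Fin n)) :
    extRep n n f = sgnExt n f • 1 := by
  set ω := exteriorPower.ιMulti ℂ n (fun i : Fin n => (Pi.single i 1 : Fin n → ℂ))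
  have hω : extRep n n f ω = sgnExt n f • ω := by
    rw [extRep_ιMulti]
    convert (exteriorPower.ιMulti ℂ n).map_comp_eq_sgnExt_smul _ f using 2
    funext i
    exact natRep_single n f i 1
  refine LinearMap.ext fun x => ?_
  obtain ⟨c, rfl⟩ :=
    (finrank_eq_one_iff_of_nonzero' ω (exteriorPower.ιMulti_piSingle_ne_zero ℂ n)).1
      (exteriorPower.finrank_eq_one_of_finrank_eq (Module.finrank_fin_fun ℂ)) x
  rw [map_smul, hω, LinearMap.smul_apply, Module.End.one_apply, smul_comm]

section signSum

open Equiv MonoidAlgebra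

variable (k : Type*) [CommRing k] (n : ℕ)

noncomputable def signSum : MonoidAlgebra k (Function.End (Fin n)) :=
  ∑ σ : Perm (Fin n), single (permToEnd n σ) ((Perm.sign σ : ℤ) : k)

variable {k n}

theorem of_permToEnd_mul_signSum (τ : Perm (Fin n)) :
    of k _ (permToEnd n τ) * signSum k n = ((Perm.sign τ : ℤ) : k) • signSum k n := by
  rw [signSum, Finset.mul_sum, Finset.smul_sum]
  refine Fintype.sum_equiv (Equiv.mulLeft τ) _ _ fun σ => ?_
  have hsign : Perm.sign σ = Perm.sign τ * Perm.sign (τ * σ) := by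
    rw [Perm.sign_mul, ← mul_assoc, Int.units_mul_self, one_mul]
  rw [of_apply, single_mul_single, one_mul, smul_single', Equiv.coe_mulLeft, map_mul, hsign]
  push_cast
  rfl

/-- A map identifying two points absorbs their transposition, which negates `signSum`. -/
theorem of_mul_signSum_of_not_injective [Invertible (2 : k)] {f : Function.End (Fin n)}
    (hf : ¬ Function.Injective f) : of k _ f * signSum k n = 0 := by
  obtain ⟨a, b, hab, hne⟩ := Function.not_injective_iff.1 hf
  have hswap : f * permToEnd n (swap a b) = f := by
    funext x
    show f (swap a b x) = f x
    rw [swap_apply_def]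
    split_ifs <;> simp_all
  have hneg : of k _ f * signSum k n = -(of k _ f * signSum k n) := by
    conv_lhs => rw [← hswap, map_mul, mul_assoc, of_permToEnd_mul_signSum, Perm.sign_swap hne]
    simp
  have htwo : (2 : k) • (of k _ f * signSum k n) = 0 := by
    rw [two_smul]
    nth_rw 2 [hneg]
    exact add_neg_cancel _
  simpa [smul_smul] using congrArg ((⅟2 : k) • ·) htwo

theorem sgnExt_permToEnd (σ : Perm (Fin n)) : sgnExt n (permToEnd n σ) = Perm.sign σ := by
  rw [sgnExt, dif_pos (show Function.Bijective (permToEnd n σ) from σ.bijective)]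
  congr
  ext
  rfl

theorem of_mul_signSum (f : Function.End (Fin n)) :
    of ℂ _ f * signSum ℂ n = sgnExt n f • signSum ℂ n := by
  by_cases hf : Function.Bijective f
  · rw [sgnExt, dif_pos hf]
    exact of_permToEnd_mul_signSum (Equiv.ofBijective f hf)
  · rw [sgnExt, dif_neg hf, zero_smul]
    exact of_mul_signSum_of_not_injective fun h => hf (Finite.injective_iff_bijective.1 h)

theorem asAlgebraHom_signSum {V : Type*} [AddCommGroup V] [Module k V]
    {ρ : Representation k (Function.End (Fin n)) V}
    (hρ : ∀ σ : Perm (Fin n), ρ (permToEnd n σ) = ((Perm.sign σ : ℤ) : k) • 1) :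
    ρ.asAlgebraHom (signSum k n) = (n.factorial : k) • 1 := by
  simp_rw [signSum, map_sum, Representation.asAlgebraHom_single, hρ, smul_smul]
  simp [← Int.cast_mul, ← Units.val_mul, Int.units_mul_self, Finset.card_univ,
    Fintype.card_perm, Nat.cast_smul_eq_nsmul]

end signSum

/-- The one-dimensional representation of `T_n` given by `sgn` on permutations and
`0` on non-bijective maps is a well-defined monoid homomorphism `T_n → (ℂ, ·)`, and
the corresponding `ℂ[T_n]`-module is isomorphic to the top exterior power `Λ^n(ℂ^n)`
with the natural action; in particular `Λ^n(ℂ^n)` is a projective simple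
`ℂ[T_n]`-module. -/
theorem sign_representation_top_exteriorPower (n : ℕ) :
    sgnExt n 1 = 1 ∧
    (∀ f g : Function.End (Fin n), sgnExt n (f * g) = sgnExt n f * sgnExt n g) ∧
    (∃ φ : ℂ ≃ₗ[ℂ] ↥(⋀[ℂ]^n (Fin n → ℂ)),
      ∀ (f : Function.End (Fin n)) (c : ℂ), φ (sgnExt n f * c) = extRep n n f (φ c)) ∧
    Module.Projective (MonoidAlgebra ℂ (Function.End (Fin n))) ((extRep n n).asModule) ∧
    IsSimpleModule (MonoidAlgebra ℂ (Function.End (Fin n))) ((extRep n n).asModule) := by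
  have hρ := extRep_top_eq_smul_one n
  have hdim : Module.finrank ℂ (⋀[ℂ]^n (Fin n → ℂ)) = 1 :=
    exteriorPower.finrank_eq_one_of_finrank_eq (Module.finrank_fin_fun ℂ)
  have : Nontrivial (⋀[ℂ]^n (Fin n → ℂ)) := Module.nontrivial_of_finrank_eq_succ hdim
  have hη : (extRep n n).asAlgebraHom ((n.factorial : ℂ)⁻¹ • signSum ℂ n) = 1 := by
    rw [map_smul, asAlgebraHom_signSum fun σ => by rw [hρ, sgnExt_permToEnd], smul_smul,
      inv_mul_cancel₀ (by exact_mod_cast Nat.factorial_ne_zero n), one_smul]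
  refine ⟨Representation.map_one_of_eq_smul_one hρ, Representation.map_mul_of_eq_smul_one hρ,
    ⟨LinearEquiv.ofFinrankEq _ _ (by rw [hdim, Module.finrank_self]), fun f c => ?_⟩,
    Representation.projective_asModule_of_eq_smul_one hρ
      (fun f => by rw [mul_smul_comm, of_mul_signSum, smul_comm]) hη,
    (isSimpleModule_iff _ _).2 ?_⟩
  · rw [← smul_eq_mul, map_smul, hρ]
    rfl
  · refine is_simple_module_of_finrank_eq_one (K := ℂ) (V := (extRep n n).asModule) ?_
    rwa [(extRep n n).asModuleEquiv.finrank_eq]
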